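/- Let m, K ∈ ℕ, and for each k ∈ {1,…,K} let h_k ∈ ℂ^m be a channel vector, φ_k > 0 a real interference-plus-noise constant, and Y_k > 0 a real weight. Let P : (ℂ^m)^K → ℝ be any real-valued (weighted power) function of the beamformer tuple v = (v_1, …, v_K), and let F ⊆ (ℂ^m)^K be any (feasible) set. For v ∈ (ℂ^m)^K define z_{k,j}(v) = h_k^H v_j, S_k(v) = ∑_{j=1}^{K} |z_{k,j}(v)|² + φ_k, SINR_k(v) = |z_{k,k}(v)|² / (∑_{j≠k} |z_{k,j}(v)|² + φ_k), R_k(v) = log(1 + SINR_k(v)), and for w ∈ (0,∞)^K, u ∈ ℂ^K define the WMMSE objective W(v, w, u) = ∑_{k=1}^{K} Y_k·( w_k·(|u_k|²·S_k(v) − 2·Re(u_k·z_{k,k}(v)) + 1) − log w_k ) + P(v). Then a point v* ∈ F minimizes the weighted objective v ↦ P(v) − ∑_{k=1}^{K} Y_k·R_k(v) over F if and only if there exist w* ∈ (0,∞)^K and u* ∈ ℂ^K such that (v*, w*, u*) minimizes W over F × (0,∞)^K × ℂ^K; moreover, for every v the partial infimum satisfies inf_{w,u} W(v, w, u) = P(v)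 − ∑_k Y_k·R_k(v) + ∑_k Y_k. (Paper's Proposition 1: the weighted-rate-minus-power problem and the WMMSE problem have the same optimal beamformer solutions.) -/

import Mathlib

/-!
For fixed beamformers each user's WMMSE term is minimised in closed form. Completing the square,
the receive filter `u = conj z / S` gives the MMSE `1 - |z|² / S = D / S`, where `D = S - |z|²`
is the interference-plus-noise power; since `w e - log w ≥ 1 + log e` with equality at
`w = 1 / e`, the weight `w = S / D` then gives `1 - log (S / D) = 1 - R_k`. So
`inf_{w,u} W(v, ·, ·) = P(v) - ∑ Y_k R_k(v) + ∑ Y_k` is attained for every `v`, and minimising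
a partial minimum over `v` is the same as minimising jointly.
-/

open Finset

noncomputable section

namespace HCRANWMMSE

variable (m K : ℕ)

/-- Effective channel coefficient `z_{k,j}(v) = h_k^H v_j`. -/
def zc (h : Fin K → Fin m → ℂ) (v : Fin K → Fin m → ℂ) (k j : Fin K) : ℂ :=
  ∑ i, (starRingEnd ℂ) (h k i) * v j i

/-- Total received power plus interference-plus-noise `S_k(v)`. -/
def Sk (h : Fin K → Fin m → ℂ) (φ : Fin K → ℝ) (v : Fin K → Fin m → ℂ) (k : Fin K) : ℝ :=
  ∑ j, ‖zc m K h v k j‖ ^ 2 + φ k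

/-- Signal-to-interference-plus-noise ratio of user `k`. -/
def SINR (h : Fin K → Fin m → ℂ) (φ : Fin K → ℝ) (v : Fin K → Fin m → ℂ) (k : Fin K) : ℝ :=
  ‖zc m K h v k k‖ ^ 2 / (∑ j ∈ Finset.univ.erase k, ‖zc m K h v k j‖ ^ 2 + φ k)

/-- Achievable rate (in nats) of user `k`. -/
def Rk (h : Fin K → Fin m → ℂ) (φ : Fin K → ℝ) (v : Fin K → Fin m → ℂ) (k : Fin K) : ℝ :=
  Real.log (1 + SINR m K h φ v k)

/-- The WMMSE objective `W(v, w, u)`. -/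
def W (h : Fin K → Fin m → ℂ) (φ : Fin K → ℝ) (Y : Fin K → ℝ)
    (P : (Fin K → Fin m → ℂ) → ℝ)
    (v : Fin K → Fin m → ℂ) (w : Fin K → ℝ) (u : Fin K → ℂ) : ℝ :=
  ∑ k, Y k * (w k * (‖u k‖ ^ 2 * Sk m K h φ v k - 2 * (u k * zc m K h v k k).re + 1)
      - Real.log (w k)) + P v

theorem minimizer_iff_exists_joint_minimizer_of_isLeast {α β γ δ : Type*} [Preorder δ]
    {f : α → δ} {g : α → β → γ → δ} {B : Set β}
    (hf : ∀ v, IsLeast {x | ∃ w u, w ∈ B ∧ x = g v w u} (f v)) (F : Set α) (vstar : α) :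
    (vstar ∈ F ∧ ∀ v ∈ F, f vstar ≤ f v) ↔
      ∃ w u, w ∈ B ∧ vstar ∈ F ∧ ∀ v ∈ F, ∀ w' ∈ B, ∀ u', g vstar w u ≤ g v w' u' := by
  constructor
  · rintro ⟨hvstar, hmin⟩
    obtain ⟨w, u, hw, hfw⟩ := (hf vstar).1
    exact ⟨w, u, hw, hvstar, fun v hv w' hw' u' =>
      hfw ▸ (hmin v hv).trans ((hf v).2 ⟨w', u', hw', rfl⟩)⟩
  · rintro ⟨w, u, hw, hvstar, hmin⟩
    refine ⟨hvstar, fun v hv => ?_⟩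
    obtain ⟨w', u', hw', hfw'⟩ := (hf v).1
    exact hfw' ▸ ((hf vstar).2 ⟨w, u, hw, rfl⟩).trans (hmin v hv w' hw' u')

section Scalar

open ComplexConjugate

theorem one_sub_sq_norm_div_le_mse {S : ℝ} (hS : 0 < S) (z u : ℂ) :
    1 - ‖z‖ ^ 2 / S ≤ ‖u‖ ^ 2 * S - 2 * (u * z).re + 1 := by
  have hsquare : ‖u‖ ^ 2 * S - 2 * (u * z).re + ‖z‖ ^ 2 / S = ‖S * u - conj z‖ ^ 2 / S := by
    simp only [Complex.sq_norm, Complex.normSq_apply, Complex.sub_re, Complex.sub_im,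
      Complex.mul_re, Complex.mul_im, Complex.ofReal_re, Complex.ofReal_im, Complex.conj_re,
      Complex.conj_im]
    field_simp
    ring
  have : 0 ≤ ‖S * u - conj z‖ ^ 2 / S := by positivity
  linarith

theorem mse_conj_div {S : ℝ} (hS : S ≠ 0) (z : ℂ) :
    ‖conj z / S‖ ^ 2 * S - 2 * (conj z / S * z).re + 1 = 1 - ‖z‖ ^ 2 / S := by
  have hre : (conj z / S * z).re = ‖z‖ ^ 2 / S := by
    rw [div_mul_eq_mul_div, mul_comm, Complex.mul_conj, Complex.normSq_eq_norm_sq]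
    norm_cast
  rw [hre, norm_div, RCLike.norm_conj, Complex.norm_real, Real.norm_eq_abs, div_pow, sq_abs]
  field_simp
  ring

theorem one_add_log_le_mul_sub_log {e w : ℝ} (he : 0 < e) (hw : 0 < w) :
    1 + Real.log e ≤ w * e - Real.log w := by
  have := Real.log_le_sub_one_of_pos (mul_pos hw he)
  rw [Real.log_mul hw.ne' he.ne'] at this
  linarith

variable {S D : ℝ} {z : ℂ}

theorem one_sub_log_div_le_wmse (hD : 0 < D) (hSD : S = ‖z‖ ^ 2 + D) (u : ℂ) {w : ℝ}
    (hw : 0 < w) :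
    1 - Real.log (S / D) ≤ w * (‖u‖ ^ 2 * S - 2 * (u * z).re + 1) - Real.log w := by
  have hS : 0 < S := by rw [hSD]; positivity
  have hmse : D / S ≤ ‖u‖ ^ 2 * S - 2 * (u * z).re + 1 := by
    convert one_sub_sq_norm_div_le_mse hS z u using 1
    field_simp
    linarith
  calc 1 - Real.log (S / D) = 1 + Real.log (D / S) := by
        rw [← inv_div, Real.log_inv, sub_neg_eq_add]
    _ ≤ w * (D / S) - Real.log w := one_add_log_le_mul_sub_log (div_pos hD hS) hw
    _ ≤ _ := by gcongr

theorem wmse_div_conj_div (hD : 0 < D) (hSD : S = ‖z‖ ^ 2 + D) :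
    S / D * (‖conj z / S‖ ^ 2 * S - 2 * (conj z / S * z).re + 1) - Real.log (S / D)
      = 1 - Real.log (S / D) := by
  have hS : 0 < S := by rw [hSD]; positivity
  rw [mse_conj_div hS.ne']
  field_simp
  linarith

end Scalar

def Dk (h : Fin K → Fin m → ℂ) (φ : Fin K → ℝ) (v : Fin K → Fin m → ℂ) (k : Fin K) : ℝ :=
  ∑ j ∈ Finset.univ.erase k, ‖zc m K h v k j‖ ^ 2 + φ k

section Channel

open ComplexConjugate

variable {m K} (h : Fin K → Fin m → ℂ) {φ : Fin K → ℝ} (v : Fin K → Fin m → ℂ)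

theorem Dk_pos (hφ : ∀ k, 0 < φ k) (k : Fin K) : 0 < Dk m K h φ v k := by
  have := hφ k
  unfold Dk
  positivity

theorem Sk_eq_sq_norm_add_Dk (k : Fin K) :
    Sk m K h φ v k = ‖zc m K h v k k‖ ^ 2 + Dk m K h φ v k := by
  rw [Sk, Dk, ← Finset.add_sum_erase _ _ (Finset.mem_univ k), add_assoc]

theorem Rk_eq_log_Sk_div_Dk (hφ : ∀ k, 0 < φ k) (k : Fin K) :
    Rk m K h φ v k = Real.log (Sk m K h φ v k / Dk m K h φ v k) := by
  have hD := Dk_pos h v hφ k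
  change Real.log (1 + ‖zc m K h v k k‖ ^ 2 / Dk m K h φ v k) = _
  rw [Sk_eq_sq_norm_add_Dk]
  field_simp
  ring_nf

theorem isLeast_W (hφ : ∀ k, 0 < φ k) {Y : Fin K → ℝ} (hY : ∀ k, 0 < Y k)
    (P : (Fin K → Fin m → ℂ) → ℝ) :
    IsLeast {x | ∃ w u, (∀ k, 0 < w k) ∧ x = W m K h φ Y P v w u}
      (P v - ∑ k, Y k * Rk m K h φ v k + ∑ k, Y k) := by
  have hvalue : P v - ∑ k, Y k * Rk m K h φ v k + ∑ k, Y k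
      = ∑ k, Y k * (1 - Real.log (Sk m K h φ v k / Dk m K h φ v k)) + P v := by
    simp only [Rk_eq_log_Sk_div_Dk h v hφ, mul_sub, mul_one, sum_sub_distrib]
    ring
  have hD := Dk_pos h v hφ
  have hS (k : Fin K) : 0 < Sk m K h φ v k := by
    have := hD k
    rw [Sk_eq_sq_norm_add_Dk]
    positivity
  rw [hvalue]
  refine ⟨⟨fun k => Sk m K h φ v k / Dk m K h φ v k,
    fun k => conj (zc m K h v k k) / Sk m K h φ v k,
    fun k => div_pos (hS k) (hD k), ?_⟩, ?_⟩
  · unfold W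
    congr 1
    refine sum_congr rfl fun k _ => ?_
    rw [wmse_div_conj_div (hD k) (Sk_eq_sq_norm_add_Dk h v k)]
  · rintro _ ⟨w, u, hw, rfl⟩
    unfold W
    gcongr ∑ k, ?_ + _ with k
    exact mul_le_mul_of_nonneg_left
      (one_sub_log_div_le_wmse (hD k) (Sk_eq_sq_norm_add_Dk h v k) (u k) (hw k)) (hY k).le

end Channel

/-- Paper's Proposition 1: `v*` minimizes the weighted power-minus-rate
objective over the feasible set `F` iff there exist MSE weights `w*` and
receive filters `u*` so that `(v*, w*, u*)` jointly minimizes the WMMSE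
objective over `F × (0,∞)^K × ℂ^K`; moreover for every `v` the partial
infimum of `W(v, ·, ·)` equals `P(v) - ∑ Y_k R_k(v) + ∑ Y_k`. -/
theorem wsr_wmmse_equivalence (h : Fin K → Fin m → ℂ) (φ : Fin K → ℝ)
    (hφ : ∀ k, 0 < φ k) (Y : Fin K → ℝ) (hY : ∀ k, 0 < Y k)
    (P : (Fin K → Fin m → ℂ) → ℝ) (F : Set (Fin K → Fin m → ℂ))
    (vstar : Fin K → Fin m → ℂ) :
    ((vstar ∈ F ∧ ∀ v ∈ F,
        P vstar - ∑ k, Y k * Rk m K h φ vstar k ≤ P v - ∑ k, Y k * Rk m K h φ v k)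
      ↔ (∃ w : Fin K → ℝ, ∃ u : Fin K → ℂ, (∀ k, 0 < w k) ∧ vstar ∈ F ∧
          ∀ v ∈ F, ∀ w' : Fin K → ℝ, (∀ k, 0 < w' k) → ∀ u' : Fin K → ℂ,
            W m K h φ Y P vstar w u ≤ W m K h φ Y P v w' u'))
    ∧ (∀ v : Fin K → Fin m → ℂ,
        IsGLB {x : ℝ | ∃ w : Fin K → ℝ, ∃ u : Fin K → ℂ,
            (∀ k, 0 < w k) ∧ x = W m K h φ Y P v w u}
          (P v - ∑ k, Y k * Rk m K h φ v k + ∑ k, Y k)) := by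
  have hleast v := isLeast_W h v hφ hY P
  refine ⟨?_, fun v => (hleast v).isGLB⟩
  simpa only [add_le_add_iff_right, Set.mem_ofPred_eq] using
    minimizer_iff_exists_joint_minimizer_of_isLeast (B := {w : Fin K → ℝ | ∀ k, 0 < w k})
      hleast F vstar

end HCRANWMMSE
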